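/- arXiv:2603.27845 — 2 statements merged into one kernel-verified Lean document; each statement's English description precedes it below -/
import Mathlib

section
/- Consider the Watts–Strogatz mean-field system with inertia δ = 0. Suppose the Case-2 condition holds: p·(α+β)·r > α and p·(α+β)·(1−r) < α. Let c be a real number with 1/2 < c ≤ 1. Then every solution θ = (θ^B, θ^R) of the system on [0, ∞) with θ^B(0) = θ^R(0) = c satisfies θ(t) → (0, 1) as t → ∞ (party-line polarization, with the red group fully adopting the initially more popular choice and the blue group adopting the other choice). -/
open Set Filter

/-- `g^B(θ) = α(1−pr)(2θ^B−1) − βpr(2θ^R−1)`. -/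
noncomputable def gB (α β p r θB θR : ℝ) : ℝ :=
  α * (1 - p * r) * (2 * θB - 1) - β * p * r * (2 * θR - 1)

/-- `g^R(θ) = α(1−p(1−r))(2θ^R−1) − β(1−r)p(2θ^B−1)`. -/
noncomputable def gR (α β p r θB θR : ℝ) : ℝ :=
  α * (1 - p * (1 - r)) * (2 * θR - 1) - β * (1 - r) * p * (2 * θB - 1)

/-- Right-hand side of the blue equation:
`(1−θ^B)·𝟙[g^B(θ) > 0] − θ^B·𝟙[g^B(θ) < 0]`. -/
noncomputable def rhsB (α β p r θB θR : ℝ) : ℝ :=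
  (1 - θB) * (if 0 < gB α β p r θB θR then 1 else 0)
    - θB * (if gB α β p r θB θR < 0 then 1 else 0)

/-- Right-hand side of the red equation:
`(1−θ^R)·𝟙[g^R(θ) > 0] − θ^R·𝟙[g^R(θ) < 0]`. -/
noncomputable def rhsR (α β p r θB θR : ℝ) : ℝ :=
  (1 - θR) * (if 0 < gR α β p r θB θR then 1 else 0)
    - θR * (if gR α β p r θB θR < 0 then 1 else 0)

/-- `θ = (θ^B, θ^R)` is a solution of the Watts–Strogatz mean-field system
(with inertia `δ = 0`) on the set `J`: it is differentiable on `J` and satisfies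
the two differential equations at every `t ∈ J`. -/
def IsWSSolutionOn (α β p r : ℝ) (θB θR : ℝ → ℝ) (J : Set ℝ) : Prop :=
  ∀ t ∈ J,
    HasDerivWithinAt θB (rhsB α β p r (θB t) (θR t)) J t ∧
    HasDerivWithinAt θR (rhsR α β p r (θB t) (θR t)) J t

open Topology Real

/-! Along the trajectory `θ(t) = (c e^{-t}, 1 - (1 - c) e^{-t})` one has `θ^B ≤ θ^R` and
`θ^R > 1/2`, and under the Case-2 condition these two inequalities force `g^B < 0 < g^R`.
So the trajectory solves the system, whose right-hand side is the linear field
`(-θ^B, 1 - θ^R)` near it; a continuous induction shows that every solution starting at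
`(c, c)` coincides with it. -/

theorem eqOn_Ici_of_forall_eventually_nhdsGE {E : Type*} [TopologicalSpace E] [T2Space E]
    {f g : ℝ → E} {a : ℝ} (hf : ContinuousOn f (Ici a)) (hg : ContinuousOn g (Ici a))
    (ha : f a = g a) (hstep : ∀ x, a ≤ x → f x = g x → ∀ᶠ t in 𝓝[≥] x, f t = g t) :
    EqOn f g (Ici a) := by
  intro b hb
  have hclosed : IsClosed ({t | f t = g t} ∩ Icc a b) := by
    rw [inter_comm]
    exact ((hf.prodMk hg).mono Icc_subset_Ici_self).preimage_isClosed_of_isClosed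
      isClosed_Icc isClosed_diagonal
  refine hclosed.Icc_subset_of_forall_mem_nhdsWithin ha
    (fun x ⟨hx, hxab⟩ => nhdsWithin_mono x Ioi_subset_Ici_self (hstep x hxab.1 hx))
    ⟨hb, le_rfl⟩

theorem eq_exp_mul_of_hasDerivWithinAt_neg {f : ℝ → ℝ} {a b : ℝ}
    (hf : ContinuousOn f (Icc a b))
    (hf' : ∀ t ∈ Ico a b, HasDerivWithinAt f (-f t) (Ici t) t) :
    ∀ t ∈ Icc a b, f t = exp (a - t) * f a := by
  have hconst : ∀ t ∈ Icc a b, exp t * f t = exp a * f a :=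
    constant_of_has_deriv_right_zero (continuous_exp.continuousOn.mul hf)
      fun t ht => (((hasDerivAt_exp t).hasDerivWithinAt).mul (hf' t ht)).congr_deriv (by ring)
  intro t ht
  rw [exp_sub, div_mul_eq_mul_div, ← hconst t ht]
  field_simp

section Signs

variable {α β p r : ℝ}

theorem gB_neg_of_le (hα : 0 ≤ α) (hpr : p * r ≤ 1) (hcase : α < p * (α + β) * r)
    {u v : ℝ} (huv : u ≤ v) (hv : 1 / 2 < v) : gB α β p r u v < 0 := by
  have hα' : 0 ≤ α * (1 - p * r) := mul_nonneg hα (by linarith)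
  calc gB α β p r u v ≤ (α - p * (α + β) * r) * (2 * v - 1) := by
        unfold gB
        linarith [mul_le_mul_of_nonneg_left (by linarith : 2 * u - 1 ≤ 2 * v - 1) hα']
    _ < 0 := mul_neg_of_neg_of_pos (by linarith) (by linarith)

theorem gR_pos_of_le (hβ : 0 ≤ β) (hp : 0 ≤ p) (hr : r ≤ 1)
    (hcase : p * (α + β) * (1 - r) < α) {u v : ℝ} (huv : u ≤ v) (hv : 1 / 2 < v) :
    0 < gR α β p r u v := by
  have hβ' : 0 ≤ β * (1 - r) * p := mul_nonneg (mul_nonneg hβ (by linarith)) hp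
  calc 0 < (α - p * (α + β) * (1 - r)) * (2 * v - 1) := mul_pos (by linarith) (by linarith)
    _ ≤ gR α β p r u v := by
        unfold gR
        linarith [mul_le_mul_of_nonneg_left (by linarith : 2 * u - 1 ≤ 2 * v - 1) hβ']

theorem rhsB_of_gB_neg {θB θR : ℝ} (h : gB α β p r θB θR < 0) :
    rhsB α β p r θB θR = -θB := by
  simp [rhsB, h, h.not_gt]

theorem rhsR_of_gR_pos {θB θR : ℝ} (h : 0 < gR α β p r θB θR) :
    rhsR α β p r θB θR = 1 - θR := by
  simp [rhsR, h, h.not_gt]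

end Signs

noncomputable def polarized (c t : ℝ) : ℝ × ℝ := (c * exp (-t), 1 - (1 - c) * exp (-t))

theorem continuous_polarized (c : ℝ) : Continuous (polarized c) := by
  unfold polarized; fun_prop

theorem tendsto_polarized (c : ℝ) : Tendsto (polarized c) atTop (𝓝 (0, 1)) := by
  have h := tendsto_exp_neg_atTop_nhds_zero
  unfold polarized
  simpa using (h.const_mul c).prodMk_nhds
    (tendsto_const_nhds (x := (1 : ℝ)).sub (h.const_mul (1 - c)))

theorem polarized_fst_le_snd {c t : ℝ} (ht : 0 ≤ t) :
    (polarized c t).1 ≤ (polarized c t).2 := by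
  have : exp (-t) ≤ 1 := exp_le_one_iff.2 (by linarith)
  simp only [polarized]; linarith

theorem half_lt_polarized_snd {c t : ℝ} (hc : 1 / 2 < c) (ht : 0 ≤ t) :
    1 / 2 < (polarized c t).2 := by
  have h1 : exp (-t) ≤ 1 := exp_le_one_iff.2 (by linarith)
  have h0 : 0 < exp (-t) := exp_pos _
  simp only [polarized]; nlinarith

section Solution

variable {α β p r : ℝ} {θB θR : ℝ → ℝ} {J : Set ℝ}

theorem IsWSSolutionOn.continuousOn (hsol : IsWSSolutionOn α β p r θB θR J) :
    ContinuousOn (fun t => (θB t, θR t)) J :=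
  fun t ht => (hsol t ht).1.continuousWithinAt.prodMk (hsol t ht).2.continuousWithinAt

theorem IsWSSolutionOn.eventually_gB_neg_and_gR_pos
    (hsol : IsWSSolutionOn α β p r θB θR (Ici 0)) {x : ℝ} (hx : 0 ≤ x)
    (hgB : gB α β p r (θB x) (θR x) < 0) (hgR : 0 < gR α β p r (θB x) (θR x)) :
    ∀ᶠ t in 𝓝[≥] x, gB α β p r (θB t) (θR t) < 0 ∧ 0 < gR α β p r (θB t) (θR t) := by
  have hθB : ContinuousOn θB (Ici 0) := hsol.continuousOn.fst
  have hθR : ContinuousOn θR (Ici 0) := hsol.continuousOn.snd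
  have hgBc : ContinuousOn (fun t => gB α β p r (θB t) (θR t)) (Ici 0) := by
    unfold gB; fun_prop
  have hgRc : ContinuousOn (fun t => gR α β p r (θB t) (θR t)) (Ici 0) := by
    unfold gR; fun_prop
  exact nhdsWithin_mono x (Ici_subset_Ici.2 hx)
    (((hgBc x hx).eventually (Iio_mem_nhds hgB)).and ((hgRc x hx).eventually (Ioi_mem_nhds hgR)))

theorem IsWSSolutionOn.eventually_eq_polarized (hsol : IsWSSolutionOn α β p r θB θR (Ici 0))
    {c x : ℝ} (hx : 0 ≤ x) (hgB : gB α β p r (θB x) (θR x) < 0)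
    (hgR : 0 < gR α β p r (θB x) (θR x)) (hθx : (θB x, θR x) = polarized c x) :
    ∀ᶠ t in 𝓝[≥] x, (θB t, θR t) = polarized c t := by
  obtain ⟨w, hxw, hIcc⟩ :=
    mem_nhdsGE_iff_exists_Icc_subset.1 (hsol.eventually_gB_neg_and_gR_pos hx hgB hgR)
  have hsub : Icc x w ⊆ Ici 0 := fun t ht => hx.trans ht.1
  have hderiv : ∀ t ∈ Ico x w, HasDerivWithinAt θB (-θB t) (Ici t) t ∧
      HasDerivWithinAt (fun s => 1 - θR s) (-(1 - θR t)) (Ici t) t := by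
    intro t ht
    obtain ⟨hgBt, hgRt⟩ := hIcc (Ico_subset_Icc_self ht)
    have ht0 : Ici t ⊆ Ici 0 := Ici_subset_Ici.2 (hsub (Ico_subset_Icc_self ht))
    obtain ⟨hB, hR⟩ := hsol t (hsub (Ico_subset_Icc_self ht))
    rw [rhsB_of_gB_neg hgBt] at hB
    rw [rhsR_of_gR_pos hgRt] at hR
    exact ⟨hB.mono ht0, ((hasDerivWithinAt_const t _ 1).sub (hR.mono ht0)).congr_deriv (by ring)⟩
  have hB := eq_exp_mul_of_hasDerivWithinAt_neg (hsol.continuousOn.fst.mono hsub)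
    fun t ht => (hderiv t ht).1
  have hR := eq_exp_mul_of_hasDerivWithinAt_neg (f := fun s => 1 - θR s)
    (continuousOn_const.sub (hsol.continuousOn.snd.mono hsub)) fun t ht => (hderiv t ht).2
  simp only [polarized, Prod.mk.injEq] at hθx ⊢
  filter_upwards [Icc_mem_nhdsGE hxw] with t ht
  have hexp : exp (x - t) * exp (-x) = exp (-t) := by rw [← exp_add]; ring_nf
  constructor
  · linear_combination hB t ht + exp (x - t) * hθx.1 + c * hexp
  · linear_combination -hR t ht + exp (x - t) * hθx.2 - (1 - c) * hexp

end Solution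

theorem ws_case2_polarization_high_general
    (α β p r : ℝ)
    (hα : α ∈ Set.Icc (0:ℝ) 1) (hβ : β ∈ Set.Icc (0:ℝ) 1)
    (hp : p ∈ Set.Icc (0:ℝ) 1) (hr : r ∈ Set.Ioo (0:ℝ) 1)
    (hcase1 : α < p * (α + β) * r) (hcase2 : p * (α + β) * (1 - r) < α)
    (c : ℝ) (hc1 : 1 / 2 < c)
    (θB θR : ℝ → ℝ)
    (hsol : IsWSSolutionOn α β p r θB θR (Set.Ici 0))
    (h0B : θB 0 = c) (h0R : θR 0 = c) :
    Filter.Tendsto (fun t => (θB t, θR t)) Filter.atTop (nhds (((0:ℝ), (1:ℝ)))) := by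
  have hpr : p * r ≤ 1 := mul_le_one₀ hp.2 hr.1.le hr.2.le
  have hθ : EqOn (fun t => (θB t, θR t)) (polarized c) (Ici 0) := by
    refine eqOn_Ici_of_forall_eventually_nhdsGE hsol.continuousOn
      (continuous_polarized c).continuousOn (by simp [polarized, h0B, h0R]) fun x hx hθx => ?_
    have hle := polarized_fst_le_snd (c := c) hx
    have hhalf := half_lt_polarized_snd hc1 hx
    rw [← hθx] at hle hhalf
    exact hsol.eventually_eq_polarized hx (gB_neg_of_le hα.1 hpr hcase1 hle hhalf)
      (gR_pos_of_le hβ.1 hp.1 hr.2.le hcase2 hle hhalf) hθx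
  exact (tendsto_polarized c).congr' (eventuallyEq_of_mem (Ici_mem_atTop 0) hθ.symm)

/-- Under the Case-2 condition p(α+β)r > α and p(α+β)(1−r) < α, with θ^B(0)=θ^R(0)=c and 1/2 < c ≤ 1, every solution on [0,∞) converges to the party-line polarized state (0,1). -/
theorem ws_case2_polarization_high
    (α β p r : ℝ)
    (hα : α ∈ Set.Icc (0:ℝ) 1) (hβ : β ∈ Set.Icc (0:ℝ) 1)
    (hp : p ∈ Set.Icc (0:ℝ) 1) (hr : r ∈ Set.Ioo (0:ℝ) 1)
    (hcase1 : α < p * (α + β) * r) (hcase2 : p * (α + β) * (1 - r) < α)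
    (c : ℝ) (hc1 : 1 / 2 < c) (hc2 : c ≤ 1)
    (θB θR : ℝ → ℝ)
    (hsol : IsWSSolutionOn α β p r θB θR (Set.Ici 0))
    (h0B : θB 0 = c) (h0R : θR 0 = c) :
    Filter.Tendsto (fun t => (θB t, θR t)) Filter.atTop (nhds (((0:ℝ), (1:ℝ)))) :=
  ws_case2_polarization_high_general α β p r hα hβ hp hr hcase1 hcase2 c hc1 θB θR hsol h0B h0R
end

section
/- Consider the Watts–Strogatz mean-field system with inertia δ = 0. Suppose the Case-3 condition holds: p·(α+β)·(1−r) > α and p·(α+β)·r < α. Let c be a real number with 1/2 < c ≤ 1. Then every solution θ = (θ^B, θ^R) of the system on [0, ∞) with θ^B(0) = θ^R(0) = c satisfies θ(t) → (1, 0) as t → ∞ (party-line polarization, with the blue group fully adopting the initially more popular choice and the red group adopting the other choice). -/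
open Set Filter

/-!
On the region `x > 1/2, y ≤ x` the Case-3 conditions give
`g^B ≥ (α - p(α+β)r)(2x - 1) > 0` and `g^R ≤ (α - p(α+β)(1-r))(2x - 1) < 0`,
so there the system reads `θ^B' = 1 - θ^B, θ^R' = -θ^R`, with first integrals
`e^t (θ^B - 1)` and `e^t θ^R`. Its solution from `(c, c)` is `(1 + (c - 1)e^{-t}, c e^{-t})`,
which stays in the region. The vector field is discontinuous, so instead of an ODE uniqueness
theorem we use that the set of times at which the first integrals take their initial values
is closed and, by the above, open in the connected set `[0, ∞)`.
-/
open Real Topology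

section Signs

variable {α β p r x y : ℝ}

theorem gB_pos_of_le (hβpr : 0 ≤ β * p * r) (hcase : p * (α + β) * r < α)
    (hx : 1 / 2 < x) (hyx : y ≤ x) : 0 < gB α β p r x y := by
  unfold gB
  nlinarith [mul_le_mul_of_nonneg_left hyx hβpr]

theorem gR_neg_of_le (hα : 0 ≤ α * (1 - p * (1 - r))) (hcase : α < p * (α + β) * (1 - r))
    (hx : 1 / 2 < x) (hyx : y ≤ x) : gR α β p r x y < 0 := by
  unfold gR
  nlinarith [mul_le_mul_of_nonneg_left hyx hα]

theorem rhsB_of_gB_pos (h : 0 < gB α β p r x y) : rhsB α β p r x y = 1 - x := by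
  simp [rhsB, h, h.not_gt]

theorem rhsR_of_gR_neg (h : gR α β p r x y < 0) : rhsR α β p r x y = -y := by
  simp [rhsR, h, h.not_gt]

end Signs

theorem IsPreconnected.eqOn_const_of_eventually_eq {X Y : Type*} [TopologicalSpace X]
    [TopologicalSpace Y] [T1Space Y] {s : Set X} (hs : IsPreconnected s) {f : X → Y}
    (hf : ContinuousOn f s) {a : X} {v : Y} (ha : a ∈ s) (hfa : f a = v)
    (hloc : ∀ t ∈ s, f t = v → ∀ᶠ u in 𝓝[s] t, f u = v) : EqOn f (fun _ => v) s := by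
  have := isPreconnected_iff_preconnectedSpace.mp hs
  have hclopen : IsClopen {t : s | f t = v} := by
    refine ⟨isClosed_singleton.preimage hf.domRestrict, isOpen_iff_mem_nhds.2 fun t ht => ?_⟩
    rw [mem_nhds_subtype_iff_nhdsWithin]
    filter_upwards [hloc t t.2 ht, self_mem_nhdsWithin] with u hu hus
    exact ⟨⟨u, hus⟩, hu, rfl⟩
  intro t ht
  have : (⟨t, ht⟩ : s) ∈ {t : s | f t = v} := hclopen.eq_univ ⟨⟨a, ha⟩, hfa⟩ ▸ mem_univ _
  exact this

theorem Convex.eventually_eq_of_eventually_hasDerivWithinAt_zero {E : Type*}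
    [NormedAddCommGroup E] [NormedSpace ℝ E] {f : ℝ → E} {s : Set ℝ} (hs : Convex ℝ s)
    {t : ℝ} (ht : t ∈ s) (hf : ∀ᶠ u in 𝓝[s] t, HasDerivWithinAt f 0 s u) :
    ∀ᶠ u in 𝓝[s] t, f u = f t := by
  obtain ⟨ε, hε, hball⟩ := Metric.mem_nhdsWithin_iff.mp hf
  have hN : Convex ℝ (Metric.ball t ε ∩ s) := (convex_ball t ε).inter hs
  filter_upwards [inter_mem_nhdsWithin s (Metric.ball_mem_nhds t hε)] with u ⟨hus, hut⟩
  have := hN.norm_image_sub_le_of_norm_hasDerivWithin_le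
    (fun w hw => (hball hw).mono inter_subset_right) (fun _ _ => norm_zero.le)
    ⟨Metric.mem_ball_self hε, ht⟩ ⟨hut, hus⟩
  simpa [sub_eq_zero] using this

theorem HasDerivWithinAt.exp_mul_sub_eq_zero {f : ℝ → ℝ} {a t : ℝ} {s : Set ℝ}
    (hf : HasDerivWithinAt f (a - f t) s t) :
    HasDerivWithinAt (fun u => Real.exp u * (f u - a)) 0 s t := by
  have : HasDerivWithinAt (fun u => Real.exp u * (f u - a))
      (Real.exp t * (f t - a) + Real.exp t * (a - f t)) s t :=
    (Real.hasDerivAt_exp t).hasDerivWithinAt.mul (hf.sub_const a)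
  rwa [← mul_add, sub_add_sub_cancel', sub_self, mul_zero] at this

noncomputable def polarInvariant (θB θR : ℝ → ℝ) (t : ℝ) : ℝ × ℝ :=
  (exp t * (θB t - 1), exp t * θR t)

noncomputable def polarPath (c t : ℝ) : ℝ × ℝ :=
  (1 + (c - 1) * exp (-t), c * exp (-t))

section Solution

variable {α β p r : ℝ} {θB θR : ℝ → ℝ} {s : Set ℝ}

theorem IsWSSolutionOn.continuousOn_polarInvariant (hsol : IsWSSolutionOn α β p r θB θR s) :
    ContinuousOn (polarInvariant θB θR) s := by
  have hB : ContinuousOn θB s := fun t ht => (hsol t ht).1.continuousWithinAt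
  have hR : ContinuousOn θR s := fun t ht => (hsol t ht).2.continuousWithinAt
  unfold polarInvariant
  fun_prop

theorem IsWSSolutionOn.eventually_polarInvariant_eq (hsol : IsWSSolutionOn α β p r θB θR s)
    (hs : Convex ℝ s) {t : ℝ} (ht : t ∈ s) (hB : 0 < gB α β p r (θB t) (θR t))
    (hR : gR α β p r (θB t) (θR t) < 0) :
    ∀ᶠ u in 𝓝[s] t, polarInvariant θB θR u = polarInvariant θB θR t := by
  have hθB := (hsol t ht).1.continuousWithinAt
  have hθR := (hsol t ht).2.continuousWithinAt
  have hcB : ContinuousWithinAt (fun u => gB α β p r (θB u) (θR u)) s t := by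
    unfold gB; fun_prop
  have hcR : ContinuousWithinAt (fun u => gR α β p r (θB u) (θR u)) s t := by
    unfold gR; fun_prop
  apply hs.eventually_eq_of_eventually_hasDerivWithinAt_zero ht
  filter_upwards [hcB.eventually (lt_mem_nhds hB), hcR.eventually (gt_mem_nhds hR),
    self_mem_nhdsWithin] with u hBu hRu hus
  obtain ⟨hθB', hθR'⟩ := hsol u hus
  rw [rhsB_of_gB_pos hBu] at hθB'
  rw [rhsR_of_gR_neg hRu, neg_eq_zero_sub] at hθR'
  have := hθB'.exp_mul_sub_eq_zero.prodMk hθR'.exp_mul_sub_eq_zero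
  simp only [sub_zero, Prod.mk_zero_zero] at this
  exact this

end Solution

theorem polarInvariant_eq_iff {θB θR : ℝ → ℝ} {c t : ℝ} :
    polarInvariant θB θR t = (c - 1, c) ↔ (θB t, θR t) = polarPath c t := by
  simp only [polarInvariant, polarPath, Prod.mk.injEq, exp_neg]
  constructor <;> rintro ⟨hB, hR⟩ <;> constructor <;> field_simp at * <;> linarith

theorem polarPath_mem_region {c t : ℝ} (hc : 1 / 2 < c) (ht : 0 ≤ t) :
    1 / 2 < (polarPath c t).1 ∧ (polarPath c t).2 ≤ (polarPath c t).1 := by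
  have he : exp (-t) ≤ 1 := exp_le_one_iff.mpr (neg_nonpos.mpr ht)
  have he' : 0 < exp (-t) := exp_pos _
  simp only [polarPath]
  constructor <;> nlinarith

theorem tendsto_polarPath (c : ℝ) : Tendsto (polarPath c) atTop (𝓝 (1, 0)) := by
  have h := tendsto_exp_neg_atTop_nhds_zero
  unfold polarPath
  simpa using ((tendsto_const_nhds (x := (1 : ℝ))).add (h.const_mul (c - 1))).prodMk_nhds
    (h.const_mul c)

theorem ws_case3_polarization_high_general
    (α β p r : ℝ)
    (hα : α ∈ Set.Icc (0:ℝ) 1) (hβ : β ∈ Set.Icc (0:ℝ) 1)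
    (hp : p ∈ Set.Icc (0:ℝ) 1) (hr : r ∈ Set.Ioo (0:ℝ) 1)
    (hcase1 : α < p * (α + β) * (1 - r)) (hcase2 : p * (α + β) * r < α)
    (c : ℝ) (hc1 : 1 / 2 < c)
    (θB θR : ℝ → ℝ)
    (hsol : IsWSSolutionOn α β p r θB θR (Set.Ici 0))
    (h0B : θB 0 = c) (h0R : θR 0 = c) :
    Filter.Tendsto (fun t => (θB t, θR t)) Filter.atTop (nhds (((1:ℝ), (0:ℝ)))) := by
  obtain ⟨hα0, -⟩ := hα
  obtain ⟨hβ0, -⟩ := hβ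
  obtain ⟨hp0, hp1⟩ := hp
  obtain ⟨hr0, -⟩ := hr
  have hβpr : 0 ≤ β * p * r := by positivity
  have hαR : 0 ≤ α * (1 - p * (1 - r)) := mul_nonneg hα0 (by nlinarith)
  have hinv : EqOn (polarInvariant θB θR) (fun _ => (c - 1, c)) (Ici 0) := by
    refine isPreconnected_Ici.eqOn_const_of_eventually_eq hsol.continuousOn_polarInvariant
      self_mem_Ici (by simp [polarInvariant, h0B, h0R]) fun t ht htc => ?_
    obtain ⟨hx, hyx⟩ := polarPath_mem_region hc1 ht
    rw [← polarInvariant_eq_iff.mp htc] at hx hyx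
    rw [← htc]
    exact hsol.eventually_polarInvariant_eq (convex_Ici 0) ht (gB_pos_of_le hβpr hcase2 hx hyx)
      (gR_neg_of_le hαR hcase1 hx hyx)
  refine (tendsto_polarPath c).congr' ?_
  filter_upwards [eventually_ge_atTop 0] with t ht
  exact (polarInvariant_eq_iff.mp (hinv ht)).symm

/-- Under the Case-3 condition p(α+β)(1−r) > α and p(α+β)r < α, with θ^B(0)=θ^R(0)=c and 1/2 < c ≤ 1, every solution on [0,∞) converges to the party-line polarized state (1,0). -/
theorem ws_case3_polarization_high
    (α β p r : ℝ)
    (hα : α ∈ Set.Icc (0:ℝ) 1) (hβ : β ∈ Set.Icc (0:ℝ) 1)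
    (hp : p ∈ Set.Icc (0:ℝ) 1) (hr : r ∈ Set.Ioo (0:ℝ) 1)
    (hcase1 : α < p * (α + β) * (1 - r)) (hcase2 : p * (α + β) * r < α)
    (c : ℝ) (hc1 : 1 / 2 < c) (hc2 : c ≤ 1)
    (θB θR : ℝ → ℝ)
    (hsol : IsWSSolutionOn α β p r θB θR (Set.Ici 0))
    (h0B : θB 0 = c) (h0R : θR 0 = c) :
    Filter.Tendsto (fun t => (θB t, θR t)) Filter.atTop (nhds (((1:ℝ), (0:ℝ)))) :=
  ws_case3_polarization_high_general α β p r hα hβ hp hr hcase1 hcase2 c hc1 θB θR hsol h0B h0R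
end
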